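/- Given an extended conditional intuitionistic model M = (W, ≤, R, V), define R^{n4} ⊆ W × (P(W)×P(W)) × W by: (w,(X,Y),v) ∈ R^{n4} iff there exists u with (w,X,u) ∈ R and (u,Y,v) ∈ R. Then (W, ≤, R^{n4}) satisfies the Nelsonian conditional frame conditions: (c1) ≤⁻¹ ∘ R^{n4}_{(X,Y)} ⊆ R^{n4}_{(X,Y)} ∘ ≤⁻¹ and (c2) R^{n4}_{(X,Y)} ∘ ≤ ⊆ ≤ ∘ R^{n4}_{(X,Y)}, for all X, Y ⊆ W. -/

import Mathlib

/-- An extended conditional intuitionistic model (only the frame part matters here). -/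
structure CIModel where
  W : Type
  le : W → W → Prop
  refl : ∀ w, le w w
  trans : ∀ {a b c}, le a b → le b c → le a c
  R : W → Set W → W → Prop
  c1 : ∀ (X : Set W) {w w' v}, le w w' → R w X v → ∃ v', R w' X v' ∧ le v v'
  c2 : ∀ (X : Set W) {w v v'}, R w X v → le v v' → ∃ w', le w w' ∧ R w' X v'

/-- The composed bi-set-indexed relation `R^{n4}`. -/
def Rn4 (M : CIModel) (w : M.W) (XY : Set M.W × Set M.W) (v : M.W) : Prop :=
  ∃ u, M.R w XY.1 u ∧ M.R u XY.2 v

/-! Both frame conditions are stable under relational composition: each is a zigzag that can be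
pushed through the intermediate world one factor at a time, forwards for (c1) and backwards
for (c2). Since `Rn4 M · XY ·` is the composite of `R_X` and `R_Y`, the theorem follows. -/

section Zigzag

variable {α : Type*} (le : α → α → Prop)

/-- Condition (c1): `≤⁻¹ ∘ r ⊆ r ∘ ≤⁻¹`. -/
def ForthStable (r : α → α → Prop) : Prop :=
  ∀ {w w' v}, le w w' → r w v → ∃ v', r w' v' ∧ le v v'

/-- Condition (c2): `r ∘ ≤ ⊆ ≤ ∘ r`. -/
def BackStable (r : α → α → Prop) : Prop :=
  ∀ {w v v'}, r w v → le v v' → ∃ w', le w w' ∧ r w' v'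

variable {le} {r s : α → α → Prop}

theorem ForthStable.comp (hr : ForthStable le r) (hs : ForthStable le s) :
    ForthStable le (Relation.Comp r s) := by
  rintro w w' v hww' ⟨u, hwu, huv⟩
  obtain ⟨u', hw'u', huu'⟩ := hr hww' hwu
  obtain ⟨v', hu'v', hvv'⟩ := hs huu' huv
  exact ⟨v', ⟨u', hw'u', hu'v'⟩, hvv'⟩

theorem BackStable.comp (hr : BackStable le r) (hs : BackStable le s) :
    BackStable le (Relation.Comp r s) := by
  rintro w v v' ⟨u, hwu, huv⟩ hvv'
  obtain ⟨u', huu', hu'v'⟩ := hs huv hvv'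
  obtain ⟨w', hww', hw'u'⟩ := hr hwu huu'
  exact ⟨w', hww', ⟨u', hw'u', hu'v'⟩⟩

end Zigzag

theorem Rn4_frame_conditions (M : CIModel) (XY : Set M.W × Set M.W) :
    (∀ {w w' v : M.W}, M.le w w' → Rn4 M w XY v → ∃ v', Rn4 M w' XY v' ∧ M.le v v') ∧
    (∀ {w v v' : M.W}, Rn4 M w XY v → M.le v v' → ∃ w'', M.le w w'' ∧ Rn4 M w'' XY v') := by
  have forth : ForthStable M.le (Rn4 M · XY ·) :=
    ForthStable.comp (r := (M.R · XY.1)) (M.c1 XY.1) (M.c1 XY.2)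
  have back : BackStable M.le (Rn4 M · XY ·) :=
    BackStable.comp (r := (M.R · XY.1)) (M.c2 XY.1) (M.c2 XY.2)
  exact ⟨forth, back⟩
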